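/- Let 𝒜 be a finite union-closed family of finite subsets of a linearly ordered type, with universe elements x₁,…,x_m, and let Ũ be the set of elements x_i such that x_i = max A (with respect to the index ordering) for some nonempty A ∈ 𝒜. For x_i ∈ Ũ let A_i = ⋃ {A ∈ 𝒜 : i = max{j : x_j ∈ A}}. Then x_i ∈ A_i and for every j > i, A_i ⊆ M_j, where M_j = ⋃_{A∈𝒜, x_j∉A} A. -/
import Mathlib


variable {α : Type*} [LinearOrder α]

def UnionClosed (𝒜 : Finset (Finset α)) : Prop :=
  ∀ A ∈ 𝒜, ∀ B ∈ 𝒜, A ∪ B ∈ 𝒜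

theorem A_i_subset_M_j (𝒜 : Finset (Finset α))
    (huc : UnionClosed 𝒜)
    (m : ℕ) (x : ℕ → α)
    (hbij : Set.BijOn x (Set.Icc 1 m) (𝒜.sup id : Finset α))
    (hstrict : ∀ i j, 1 ≤ i → i < j → j ≤ m → x i < x j)
    (i : ℕ) (hi1 : 1 ≤ i) (him : i ≤ m)
    -- x_i belongs to Ũ: it is the maximum of some nonempty member set
    (hUtilde : ∃ A ∈ 𝒜, A.max = (x i : WithBot α)) :
    x i ∈ (𝒜.filter (fun A => A.max = (x i : WithBot α))).sup id ∧
    ∀ j, i < j → j ≤ m →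
      (𝒜.filter (fun A => A.max = (x i : WithBot α))).sup id ⊆
        (𝒜.filter (fun A => x j ∉ A)).sup id := by
  constructor
  · obtain ⟨A, hA, hmax⟩ := hUtilde
    have hxA : x i ∈ A := Finset.mem_of_max hmax
    have : A ∈ 𝒜.filter (fun A => A.max = (x i : WithBot α)) :=
      Finset.mem_filter.mpr ⟨hA, hmax⟩
    exact (Finset.le_sup (f := id) this) hxA
  · intro j hij hjm y hy
    have hlt : x i < x j := hstrict i j hi1 hij hjm
    rw [Finset.mem_sup] at hy ⊢
    obtain ⟨B, hB, hyB⟩ := hy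
    rw [Finset.mem_filter] at hB
    refine ⟨B, Finset.mem_filter.mpr ⟨hB.1, fun hxj => ?_⟩, hyB⟩
    have := Finset.le_max hxj
    rw [hB.2] at this
    exact absurd (WithBot.coe_le_coe.mp this) (not_le_of_gt hlt)
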